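/- Let n₁, n₂, n₃ : ℕ, let P be a symmetric positive definite real matrix of size (n₁+n₂+n₃)×(n₁+n₂+n₃), let m ∈ ℝ^{n₁+n₂+n₃}, and define f : ℝ^{n₁} × ℝ^{n₂} × ℝ^{n₃} → ℝ by f(x,y,w) = exp(−(1/2)·((x,y,w)−m)ᵀ P ((x,y,w)−m)). Then there exists a constant C > 0, independent of y, such that for every y ∈ ℝ^{n₂}: ∫_{ℝ^{n₃}} ( sup_{x ∈ ℝ^{n₁}} f(x,y,w) ) dw = C · ∫_{ℝ^{n₃}} ∫_{ℝ^{n₁}} f(x,y,w) dx dw. -/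

import Mathlib

/-!
Completing the square in `x` (a Schur complement) writes the exponent as
`(x - t)ᵀ A (x - t) + s`, where `A` is the positive definite `x`-block of `P` and `t`, `s`
depend only on `(y, w)`. So the supremum over `x` is `exp (-s / 2)`, attained at `x = t`, while
by translation invariance the integral over `x` is `exp (-s / 2)` times the constant
`∫ exp (-xᵀ A x / 2) dx`, which is positive because a positive definite form dominates a
multiple of `∑ xᵢ²`. Hence `C` is the reciprocal of that constant.
-/

open Matrix MeasureTheory Real

section Gaussian

variable {ι : Type*} [Fintype ι] {A : Matrix ι ι ℝ}

theorem Matrix.PosDef.exists_pos_mul_sum_sq_le (hA : A.PosDef) :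
    ∃ c > 0, ∀ x : ι → ℝ, c * ∑ i, x i ^ 2 ≤ x ⬝ᵥ A *ᵥ x := by
  set Q : EuclideanSpace ℝ ι → ℝ := fun y => y.ofLp ⬝ᵥ A *ᵥ y.ofLp
  have hQ : Continuous Q := by fun_prop
  obtain ⟨c, hc, hcQ⟩ := (isCompact_sphere (0 : EuclideanSpace ℝ ι) 1).exists_forall_le'
    hQ.continuousOn (a := 0) fun y hy => by
      simpa using hA.dotProduct_mulVec_pos (by simpa using ne_zero_of_mem_unit_sphere ⟨y, hy⟩)
  refine ⟨c, hc, fun x => ?_⟩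
  set y := WithLp.toLp 2 x
  rcases eq_or_ne y 0 with hy | hy
  · simp [show x = 0 by simpa [y] using hy]
  have hr : 0 < ‖y‖ := norm_pos_iff.2 hy
  have hunit : ‖y‖⁻¹ • y ∈ Metric.sphere 0 1 := by simp [norm_smul, hr.ne']
  calc c * ∑ i, x i ^ 2 = ‖y‖ ^ 2 * c := by rw [EuclideanSpace.real_norm_sq_eq]; ring
    _ ≤ ‖y‖ ^ 2 * Q (‖y‖⁻¹ • y) := by gcongr; exact hcQ _ hunit
    _ = x ⬝ᵥ A *ᵥ x := by
      simp only [Q, WithLp.ofLp_smul, mulVec_smul, dotProduct_smul, smul_dotProduct,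
        smul_eq_mul, show y.ofLp = x from rfl]
      field_simp

theorem Matrix.PosDef.integrable_exp_neg_half_dotProduct_mulVec (hA : A.PosDef) :
    Integrable fun x : ι → ℝ => rexp (-(1/2) * (x ⬝ᵥ A *ᵥ x)) := by
  obtain ⟨c, hc, hcA⟩ := hA.exists_pos_mul_sum_sq_le
  have hdom : Integrable fun x : ι → ℝ => ∏ i, rexp (-(c / 2) * x i ^ 2) :=
    Integrable.fintype_prod fun _ => integrable_exp_neg_mul_sq (by positivity)
  refine hdom.mono' (by fun_prop) (Filter.Eventually.of_forall fun x => ?_)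
  rw [norm_of_nonneg (exp_pos _).le, ← Real.exp_sum, ← Finset.mul_sum]
  exact exp_le_exp.2 (by linarith [hcA x])

theorem Matrix.PosDef.ciSup_exp_neg_half_dotProduct_mulVec_sub_add (hA : A.PosDef)
    (t : ι → ℝ) (s : ℝ) :
    ⨆ x : ι → ℝ, rexp (-(1/2) * ((x - t) ⬝ᵥ A *ᵥ (x - t) + s)) = rexp (-(1/2) * s) := by
  have hle : ∀ x, rexp (-(1/2) * ((x - t) ⬝ᵥ A *ᵥ (x - t) + s)) ≤ rexp (-(1/2) * s) := by
    intro x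
    have hnonneg := hA.posSemidef.dotProduct_mulVec_nonneg (x - t)
    simp only [star_trivial] at hnonneg
    exact exp_le_exp.2 (by linarith)
  exact le_antisymm (ciSup_le hle) (le_ciSup_of_le ⟨_, Set.forall_mem_range.2 hle⟩ t (by simp))

theorem integral_exp_neg_half_dotProduct_mulVec_sub_add (A : Matrix ι ι ℝ) (t : ι → ℝ) (s : ℝ) :
    ∫ x : ι → ℝ, rexp (-(1/2) * ((x - t) ⬝ᵥ A *ᵥ (x - t) + s)) =
      rexp (-(1/2) * s) * ∫ x : ι → ℝ, rexp (-(1/2) * (x ⬝ᵥ A *ᵥ x)) := by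
  simp_rw [mul_add, Real.exp_add, integral_mul_const]
  rw [integral_sub_right_eq_self (fun x => rexp (-(1/2) * (x ⬝ᵥ A *ᵥ x))) t, mul_comm]

end Gaussian

section CompletingSquare

variable {m n : Type*} [Fintype m] [DecidableEq m] [Fintype n] {P : Matrix (m ⊕ n) (m ⊕ n) ℝ}

theorem Matrix.PosDef.exists_sumElim_dotProduct_mulVec_eq (hP : P.PosDef) :
    ∃ A : Matrix m m ℝ, A.PosDef ∧ ∃ (T : Matrix m n ℝ) (S : Matrix n n ℝ), ∀ a b,
      Sum.elim a b ⬝ᵥ P *ᵥ Sum.elim a b = (a + T *ᵥ b) ⬝ᵥ A *ᵥ (a + T *ᵥ b) + b ⬝ᵥ S *ᵥ b := by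
  have hA : P.toBlocks₁₁.PosDef := hP.submatrix Sum.inl_injective
  have hblocks : fromBlocks P.toBlocks₁₁ P.toBlocks₁₂ P.toBlocks₁₂ᴴ P.toBlocks₂₂ = P := by
    have hherm := hP.1
    rw [← fromBlocks_toBlocks P, isHermitian_fromBlocks_iff] at hherm
    rw [hherm.2.1, fromBlocks_toBlocks]
  let := hA.isUnit.invertible
  refine ⟨_, hA, P.toBlocks₁₁⁻¹ * P.toBlocks₁₂,
    P.toBlocks₂₂ - P.toBlocks₁₂ᴴ * P.toBlocks₁₁⁻¹ * P.toBlocks₁₂, fun a b => ?_⟩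
  simpa only [star_trivial, hblocks, ← dotProduct_mulVec] using
    schur_complement_eq₁₁ P.toBlocks₁₂ P.toBlocks₂₂ a b hA.1

theorem Matrix.PosDef.exists_sumElim_sub_dotProduct_mulVec_eq (hP : P.PosDef) (μ : m ⊕ n → ℝ) :
    ∃ A : Matrix m m ℝ, A.PosDef ∧ ∃ (t : (n → ℝ) → m → ℝ) (s : (n → ℝ) → ℝ), ∀ a b,
      (Sum.elim a b - μ) ⬝ᵥ P *ᵥ (Sum.elim a b - μ) = (a - t b) ⬝ᵥ A *ᵥ (a - t b) + s b := by
  obtain ⟨A, hA, T, S, hsq⟩ := hP.exists_sumElim_dotProduct_mulVec_eq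
  refine ⟨A, hA, fun b => μ ∘ Sum.inl - T *ᵥ (b - μ ∘ Sum.inr),
    fun b => (b - μ ∘ Sum.inr) ⬝ᵥ S *ᵥ (b - μ ∘ Sum.inr), fun a b => ?_⟩
  have hsplit : Sum.elim a b - μ = Sum.elim (a - μ ∘ Sum.inl) (b - μ ∘ Sum.inr) := by
    ext (i | i) <;> rfl
  rw [hsplit, hsq, sub_sub_eq_add_sub, add_sub_right_comm]

end CompletingSquare

/-- Interchange of pointwise maximization (over `x`) and integration (over `w`) for an
unnormalized Gaussian in `(x,y,w)`, up to a constant `C > 0` independent of `y`. -/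
theorem gaussian_integral_max_eq_const_mul_integral_integral (n₁ n₂ n₃ : ℕ)
    (P : Matrix (Fin n₁ ⊕ (Fin n₂ ⊕ Fin n₃)) (Fin n₁ ⊕ (Fin n₂ ⊕ Fin n₃)) ℝ)
    (hP : P.PosDef) (m : Fin n₁ ⊕ (Fin n₂ ⊕ Fin n₃) → ℝ) :
    ∃ C : ℝ, 0 < C ∧ ∀ y : Fin n₂ → ℝ,
      (∫ w : Fin n₃ → ℝ, ⨆ x : Fin n₁ → ℝ,
          Real.exp (-(1/2) * ((Sum.elim x (Sum.elim y w) - m) ⬝ᵥ P *ᵥ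
            (Sum.elim x (Sum.elim y w) - m)))) =
        C * ∫ w : Fin n₃ → ℝ, ∫ x : Fin n₁ → ℝ,
          Real.exp (-(1/2) * ((Sum.elim x (Sum.elim y w) - m) ⬝ᵥ P *ᵥ
            (Sum.elim x (Sum.elim y w) - m))) := by
  obtain ⟨A, hA, t, s, hsq⟩ := hP.exists_sumElim_sub_dotProduct_mulVec_eq m
  have hZ := integral_exp_pos hA.integrable_exp_neg_half_dotProduct_mulVec
  refine ⟨(∫ x : Fin n₁ → ℝ, rexp (-(1/2) * (x ⬝ᵥ A *ᵥ x)))⁻¹, inv_pos.2 hZ, fun y => ?_⟩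
  simp_rw [hsq, hA.ciSup_exp_neg_half_dotProduct_mulVec_sub_add,
    integral_exp_neg_half_dotProduct_mulVec_sub_add, integral_mul_const]
  rw [eq_inv_mul_iff_mul_eq₀ hZ.ne', mul_comm]
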